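/- Let J : ℝ^r × ℝ^r → ℝ be an ℝ-bilinear form and set I(u,v) = J(u,v) + J(v,u). Let f, g : ℝ → ℝ^r be continuously differentiable with g(0) = g(1). Then exp(2πi·∫₀¹ J(f(t), g'(t)) dt) · exp(2πi·∫₀¹ J(g(t), f'(t)) dt)⁻¹ = exp(2πi·(−∫₀¹ I(f'(t), g(t)) dt + J(f(1) − f(0), g(0)))). (With f a lift of a loop φ and g a lift of a based loop γ in T = ℝ^r/ℤ^r, the left-hand side is c(φ,γ)/c(γ,φ); this computes the adjoint action of φ ∈ 𝓛T on the Lie algebra of the central extension, as in the proof of the Lemma comparing c with Pressley–Segal [4.3.2].) -/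

import Mathlib

open Real Complex

/-!
Integration by parts for the bilinear form `J` turns `∫₀¹ J(f, g')` into
`J(f(1), g(1)) - J(f(0), g(0)) - ∫₀¹ J(f', g)`. Since `g` is closed, the boundary term is
`J(f(1) - f(0), g(0))`, so the exponents on the two sides agree and the exponentials are equal.
-/

namespace intervalIntegral

variable {E F G : Type*} [NormedAddCommGroup E] [NormedSpace ℝ E] [NormedAddCommGroup F]
  [NormedSpace ℝ F] [NormedAddCommGroup G] [NormedSpace ℝ G] [CompleteSpace G]

theorem integral_bilinear_deriv_right_eq_sub (B : E →L[ℝ] F →L[ℝ] G) {u : ℝ → E} {v : ℝ → F}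
    (hu : ContDiff ℝ 1 u) (hv : ContDiff ℝ 1 v) (a b : ℝ) :
    ∫ x in a..b, B (u x) (deriv v x) =
      B (u b) (v b) - B (u a) (v a) - ∫ x in a..b, B (deriv u x) (v x) := by
  have hu' : Continuous (deriv u) := hu.continuous_deriv le_rfl
  have hv' : Continuous (deriv v) := hv.continuous_deriv le_rfl
  have hu₀ : Continuous u := hu.continuous
  have hv₀ : Continuous v := hv.continuous
  have hint₁ : IntervalIntegrable (fun x ↦ B (u x) (deriv v x)) MeasureTheory.volume a b :=
    (by fun_prop : Continuous _).intervalIntegrable a b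
  have hint₂ : IntervalIntegrable (fun x ↦ B (deriv u x) (v x)) MeasureTheory.volume a b :=
    (by fun_prop : Continuous _).intervalIntegrable a b
  have hderiv : ∀ x ∈ Set.uIcc a b, HasDerivAt (fun x ↦ B (u x) (v x))
      (B (u x) (deriv v x) + B (deriv u x) (v x)) x := fun x _ ↦
    B.hasDerivAt_of_bilinear (fun _ ↦ (hu.differentiable one_ne_zero x).hasDerivAt)
      (fun _ ↦ (hv.differentiable one_ne_zero x).hasDerivAt)
  rw [← integral_eq_sub_of_hasDerivAt hderiv (hint₁.add hint₂), integral_add hint₁ hint₂,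
    add_sub_cancel_right]

theorem integral_bilinear_deriv_sub_swap_of_eq [FiniteDimensional ℝ E] (J : E →ₗ[ℝ] E →ₗ[ℝ] G)
    {f g : ℝ → E} (hf : ContDiff ℝ 1 f) (hg : ContDiff ℝ 1 g) {a b : ℝ} (hg_ab : g a = g b) :
    (∫ t in a..b, J (f t) (deriv g t)) - ∫ t in a..b, J (g t) (deriv f t) =
      -(∫ t in a..b, (J (deriv f t) (g t) + J (g t) (deriv f t))) + J (f b - f a) (g a) := by
  set B := J.toContinuousBilinearMap
  have hf' : Continuous (deriv f) := hf.continuous_deriv le_rfl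
  have hg₀ : Continuous g := hg.continuous
  have parts := integral_bilinear_deriv_right_eq_sub B hf hg a b
  simp only [B, LinearMap.toContinuousBilinearMap_apply] at parts
  have hint₁ : IntervalIntegrable (fun t ↦ J (deriv f t) (g t)) MeasureTheory.volume a b :=
    (by fun_prop : Continuous fun t ↦ B (deriv f t) (g t)).intervalIntegrable a b
  have hint₂ : IntervalIntegrable (fun t ↦ J (g t) (deriv f t)) MeasureTheory.volume a b :=
    (by fun_prop : Continuous fun t ↦ B (g t) (deriv f t)).intervalIntegrable a b
  rw [integral_add hint₁ hint₂, parts, ← hg_ab, map_sub, LinearMap.sub_apply]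
  abel

end intervalIntegral

/-- The commutator of lifts in the transgressed central extension: for an ℝ-bilinear
form `J` on `ℝ^r` with `I(u,v) = J(u,v) + J(v,u)`, and `f, g : ℝ → ℝ^r` continuously
differentiable with `g(0) = g(1)`:
`c(φ,γ)/c(γ,φ) = exp(2πi·(−∫₀¹ I(f',g) + J(f(1)−f(0), g(0))))`. -/
theorem transgression_adjoint_action (r : ℕ)
    (J : (Fin r → ℝ) →ₗ[ℝ] (Fin r → ℝ) →ₗ[ℝ] ℝ)
    (f g : ℝ → Fin r → ℝ) (hf : ContDiff ℝ 1 f) (hg : ContDiff ℝ 1 g)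
    (hclosed : g 0 = g 1) :
    Complex.exp (2 * Real.pi * Complex.I *
        ((∫ t in (0:ℝ)..1, J (f t) (deriv g t) : ℝ) : ℂ)) *
      (Complex.exp (2 * Real.pi * Complex.I *
        ((∫ t in (0:ℝ)..1, J (g t) (deriv f t) : ℝ) : ℂ)))⁻¹ =
    Complex.exp (2 * Real.pi * Complex.I *
        ((-(∫ t in (0:ℝ)..1, (J (deriv f t) (g t) + J (g t) (deriv f t))) +
          J (f 1 - f 0) (g 0) : ℝ) : ℂ)) := by
  rw [← Complex.exp_neg, ← Complex.exp_add, ← mul_neg, ← mul_add, ← ofReal_neg, ← ofReal_add,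
    ← sub_eq_add_neg, intervalIntegral.integral_bilinear_deriv_sub_swap_of_eq J hf hg hclosed]
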